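/- Let λ be a regular uncountable cardinal. Assume that G* ⊆ Q⁰_λ is ≤⁰-directed and ≤⁰-downward closed, p ∈ G*, X ⊆ C^p has cardinality λ, and C ⊆ C^p is a club of λ such that p is restrictable to ⟨X, C⟩. If ∪_{x∈X} Z^p_x ∈ fil(G*), then p↾⟨X, C⟩ ∈ G*. -/

import Mathlib

open Set Ordinal Cardinal

noncomputable section

namespace Sh830

/-- `D` is a (proper) ultrafilter on the set `Z` of ordinals. -/
def IsUltraOn (Z : Set Ordinal) (D : Set (Set Ordinal)) : Prop :=
  (∀ A ∈ D, A ⊆ Z) ∧ Z ∈ D ∧ ∅ ∉ D ∧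
  (∀ A B : Set Ordinal, A ∈ D → A ⊆ B → B ⊆ Z → B ∈ D) ∧
  (∀ A B : Set Ordinal, A ∈ D → B ∈ D → A ∩ B ∈ D) ∧
  (∀ A : Set Ordinal, A ⊆ Z → A ∈ D ∨ Z \ A ∈ D)

/-- `D` is an ultrafilter on `λ`, where `λ` is identified with the set of ordinals `< λ`. -/
def IsUltrafilterOn (l : Ordinal) (D : Set (Set Ordinal)) : Prop :=
  IsUltraOn (Iio l) D

/-- `D` is uniform: every member of `D` has cardinality `λ`. -/
def IsUniformOn (l : Ordinal) (D : Set (Set Ordinal)) : Prop :=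
  ∀ A ∈ D, #A = #(Iio l)

/-- `C` is a club (closed and unbounded) subset of `λ`. -/
def IsClubIn (C : Set Ordinal) (l : Ordinal) : Prop :=
  C ⊆ Iio l ∧
  (∀ δ, δ < l → δ ≠ 0 → sSup (C ∩ Iio δ) = δ → δ ∈ C) ∧
  (∀ α, α < l → ∃ β ∈ C, α < β)

/-- The quotient `D/f = {A ⊆ λ : f⁻¹(A) ∈ D}`. -/
def quotUF (l : Ordinal) (D : Set (Set Ordinal)) (f : Ordinal → Ordinal) :
    Set (Set Ordinal) :=
  {A | A ⊆ Iio l ∧ Iio l ∩ f ⁻¹' A ∈ D}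

/-- The family `F_λ` of all non-decreasing functions `λ → λ` with unbounded range. -/
def Flam (l : Ordinal) : Set (Ordinal → Ordinal) :=
  {f | (∀ α, α < l → f α < l) ∧ (∀ α β, α ≤ β → β < l → f α ≤ f β) ∧
    (∀ γ, γ < l → ∃ α, α < l ∧ γ ≤ f α)}

/-- `D` is weakly reasonable: for every `f ∈ F_λ` there is a club `C` of `λ` with
`∪ {[δ, δ + f δ) : δ ∈ C} ∉ D`. -/
def WeaklyReasonable (l : Ordinal) (D : Set (Set Ordinal)) : Prop :=
  ∀ f ∈ Flam l, ∃ C, IsClubIn C l ∧ (⋃ δ ∈ C, Ico δ (δ + f δ)) ∉ D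

/-- The order type of a set of ordinals: the (unique) ordinal order-isomorphic to it. -/
def setOtp (S : Set Ordinal) : Ordinal :=
  sInf {o : Ordinal | Nonempty (Iio o ≃o S)}

/-- `min(β/E)`: the least element of the `E`-equivalence class of `β`. -/
def minClass (E : Ordinal → Ordinal → Prop) (β : Ordinal) : Ordinal :=
  sInf {γ | E γ β}

/-- The function `f_E` associated with an equivalence relation `E`:
`f_E α = otp {β < α : β = min(β/E) < min(α/E)}`. -/
def fEquiv (E : Ordinal → Ordinal → Prop) (α : Ordinal) : Ordinal :=
  setOtp {β | β < α ∧ β = minClass E β ∧ minClass E β < minClass E α}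

/-- The equivalence relation `E_C` associated with a club `C`:
`α E_C β` iff `(∀ γ ∈ C)(α < γ ↔ β < γ)`. -/
def clubRel (C : Set Ordinal) (α β : Ordinal) : Prop :=
  ∀ γ ∈ C, (α < γ ↔ β < γ)

/-- The quotient `D/C = D/E_C = D/f_{E_C}`. -/
def quotClub (l : Ordinal) (D : Set (Set Ordinal)) (C : Set Ordinal) :
    Set (Set Ordinal) :=
  quotUF l D (fEquiv (clubRel C))

/-- A strategy for Odd in the game `⅁_D`: given `i < λ`, Even's moves `β_j = α_{2j}`
for `j ≤ i`, and Odd's previous moves `γ_j = α_{2j+1}` for `j < i`, it produces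
Odd's move `γ_i = α_{2i+1}`. -/
def OddStr : Type 1 :=
  (i : Ordinal) → ((j : Ordinal) → j ≤ i → Ordinal) → ((j : Ordinal) → j < i → Ordinal) → Ordinal

/-- A legal position of the game just before Odd's `i`-th move. -/
def IsPosition (l i : Ordinal) (β γ : Ordinal → Ordinal) : Prop :=
  i < l ∧ (∀ j, j ≤ i → β j < l) ∧ (∀ j, j < i → β j < γ j ∧ γ j < l) ∧
  (∀ j, j < i → γ j < β (j + 1)) ∧
  (∀ j, j ≤ i → Order.IsSuccLimit j → β j = sSup (γ '' Iio j))

/-- A complete legal play of the game of length `λ`: `β i` is `α_{2i}`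
(Even's move) and `γ i` is `α_{2i+1}` (Odd's move). -/
def IsPlay (l : Ordinal) (β γ : Ordinal → Ordinal) : Prop :=
  (∀ i, i < l → β i < l ∧ γ i < l) ∧ (∀ i, i < l → β i < γ i) ∧
  (∀ i, i + 1 < l → γ i < β (i + 1)) ∧
  (∀ i, i < l → Order.IsSuccLimit i → β i = sSup (γ '' Iio i))

/-- `st` is a legal strategy for Odd: at every legal position it produces a legal move,
i.e. an ordinal `α_{2i+1}` with `α_{2i} < α_{2i+1} < λ`. -/
def IsOddStrategy (l : Ordinal) (st : OddStr) : Prop :=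
  ∀ i β γ, IsPosition l i β γ →
    β i < st i (fun j _ => β j) (fun j _ => γ j) ∧
    st i (fun j _ => β j) (fun j _ => γ j) < l

/-- The play `(β, γ)` follows the strategy `st` of Odd. -/
def FollowsOdd (l : Ordinal) (st : OddStr) (β γ : Ordinal → Ordinal) : Prop :=
  ∀ i, i < l → γ i = st i (fun j _ => β j) (fun j _ => γ j)

/-- `st` is winning for Odd in `⅁_D`: in every play following it, Even loses, i.e.
`∪ {[α_{2i+1}, α_{2i+2}) : i < λ} ∉ D`. -/
def OddWinsWith (l : Ordinal) (D : Set (Set Ordinal)) (st : OddStr) : Prop :=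
  ∀ β γ, IsPlay l β γ → FollowsOdd l st β γ →
    (⋃ i ∈ Iio l, Ico (γ i) (β (i + 1))) ∉ D

/-- The next element of `C` above `δ`, i.e. `min (C \ (δ+1))`. -/
def nxt (C : Set Ordinal) (δ : Ordinal) : Ordinal := sInf (C ∩ Ioi δ)

/-- A condition of the forcing notion `Q¹_λ`; here `Z^p_δ = [δ, nxt C δ)` and
`d δ` is the ultrafilter `d^p_δ` on `Z^p_δ`. -/
structure Q1 (l : Ordinal) where
  γ : Ordinal
  C : Set Ordinal
  d : Ordinal → Set (Set Ordinal)
  γ_lt : γ < l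
  club : IsClubIn C l
  lim : ∀ δ ∈ C, Order.IsSuccLimit δ
  ultra : ∀ δ ∈ C, IsUltraOn (Ico δ (nxt C δ)) (d δ)

/-- The order of `Q¹_λ`. -/
def Q1le (l : Ordinal) (p q : Q1 l) : Prop :=
  p.γ ≤ q.γ ∧ p.C ∩ Iio p.γ ⊆ q.C ∧ q.C ⊆ p.C ∧
  ∀ δ ∈ q.C, ∀ A ∈ q.d δ,
    ∃ ζ ∈ p.C ∩ Ico δ (nxt q.C δ), A ∩ Ico ζ (nxt p.C ζ) ∈ p.d ζ

/-- A condition of the forcing notion `Q⁰_λ`; here `Z^p_δ = [δ, nxt C δ)` and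
`d δ` is the ultrafilter `d^p_δ` on `Z^p_δ`. -/
structure Q0 (l : Ordinal) where
  C : Set Ordinal
  d : Ordinal → Set (Set Ordinal)
  club : IsClubIn C l
  lim : ∀ δ ∈ C, Order.IsSuccLimit δ
  ultra : ∀ δ ∈ C, IsUltraOn (Ico δ (nxt C δ)) (d δ)

/-- The order relation of `Q⁰_λ`, on the underlying data. -/
def Q0leAux (Cp : Set Ordinal) (dp : Ordinal → Set (Set Ordinal))
    (Cq : Set Ordinal) (dq : Ordinal → Set (Set Ordinal)) : Prop :=
  Cq ⊆ Cp ∧ ∀ δ ∈ Cq, ∀ A ∈ dq δ,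
    ∃ ζ ∈ Cp ∩ Ico δ (nxt Cq δ), A ∩ Ico ζ (nxt Cp ζ) ∈ dp ζ

/-- The order `≤_{Q⁰_λ}`. -/
def Q0le (l : Ordinal) (p q : Q0 l) : Prop := Q0leAux p.C p.d q.C q.d

/-- The relation `≤*_{Q⁰_λ}`: for some `α < λ` the restrictions beyond `α` are
`≤_{Q⁰_λ}`-related. -/
def Q0leStar (l : Ordinal) (p q : Q0 l) : Prop :=
  ∃ α, α < l ∧ Q0leAux (p.C \ Iio α) p.d (q.C \ Iio α) q.d

/-- `fil(p) = {A ⊆ λ : (∃ ε < λ)(∀ δ ∈ C^p \ ε)(A ∩ Z^p_δ ∈ d^p_δ)}`. -/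
def fil (l : Ordinal) (p : Q0 l) : Set (Set Ordinal) :=
  {A | A ⊆ Iio l ∧ ∃ ε, ε < l ∧ ∀ δ ∈ p.C, ε ≤ δ → A ∩ Ico δ (nxt p.C δ) ∈ p.d δ}

/-- `fil(G*) = ∪ {fil(p) : p ∈ G*}`. -/
def filG (l : Ordinal) (G : Set (Q0 l)) : Set (Set Ordinal) := ⋃ p ∈ G, fil l p

/-- The relation `≤⁰`: `p ≤⁰ q` iff `fil(p) ⊆ fil(q)`. -/
def le0 (l : Ordinal) (p q : Q0 l) : Prop := fil l p ⊆ fil l q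

/-- `G` is `(<c)`-directed with respect to `le`: `G` is nonempty and every subset of `G`
of cardinality `< c` has an upper bound in `G`. -/
def DirLtOn (l : Ordinal) (c : Cardinal.{1}) (G : Set (Q0 l))
    (le : Q0 l → Q0 l → Prop) : Prop :=
  G.Nonempty ∧ ∀ S : Set (Q0 l), S ⊆ G → #S < c → ∃ r ∈ G, ∀ p ∈ S, le p r

/-- The sum `⊕^e {d_x : x ∈ X}` of ultrafilters `d x` on `Z x` along an ultrafilter `e`
on `X`. -/
def ufSum (X : Set Ordinal) (e : Set (Set Ordinal)) (Z : Ordinal → Set Ordinal)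
    (d : Ordinal → Set (Set Ordinal)) : Set (Set Ordinal) :=
  {A | A ⊆ (⋃ x ∈ X, Z x) ∧ {x | x ∈ X ∧ Z x ∩ A ∈ d x} ∈ e}

/-- The function `f_p` associated with `p ∈ Q⁰_λ`: `f_p α` is the member of `C^p` with
`otp (C^p ∩ f_p α) = ω·α + ω`. -/
def fP (l : Ordinal) (p : Q0 l) (α : Ordinal) : Ordinal :=
  sInf {β | β ∈ p.C ∧ setOtp (p.C ∩ Iio β) = Ordinal.omega0 * α + Ordinal.omega0}

/-- The space `^λλ` (functions below `l` matter). -/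
def funSp (l : Ordinal) : Set (Ordinal → Ordinal) := {f | ∀ α, α < l → f α < l}

/-- `F` is a dominating family in `^λλ`. -/
def IsDominating (l : Ordinal) (F : Set (Ordinal → Ordinal)) : Prop :=
  ∀ g ∈ funSp l, ∃ f ∈ F, ∃ α, α < l ∧ ∀ β, α < β → β < l → g β < f β

/-- The dominating number `𝔡_λ`. -/
def dLam (l : Ordinal) : Cardinal.{1} :=
  sInf {c : Cardinal | ∃ F : Set (Ordinal → Ordinal),
    F ⊆ funSp l ∧ IsDominating l F ∧ #F = c}

/-- `S` is non-stationary in `λ`. -/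
def NonStatIn (S : Set Ordinal) (l : Ordinal) : Prop :=
  ∃ C, IsClubIn C l ∧ S ∩ C = ∅

/-- `F` is a club-dominating family in `^λλ`. -/
def IsClubDominating (l : Ordinal) (F : Set (Ordinal → Ordinal)) : Prop :=
  ∀ g ∈ funSp l, ∃ f ∈ F, NonStatIn {β | β < l ∧ f β ≤ g β} l

/-- The club-dominating number `𝔡_{cl(λ)}`. -/
def dClubLam (l : Ordinal) : Cardinal.{1} :=
  sInf {c : Cardinal | ∃ F : Set (Ordinal → Ordinal),
    F ⊆ funSp l ∧ IsClubDominating l F ∧ #F = c}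

/-- `A` is a nowhere dense subset of the space `^λλ` (with basic open sets determined
by initial segments). -/
def IsNwd (l : Ordinal) (A : Set (Ordinal → Ordinal)) : Prop :=
  A ⊆ funSp l ∧
  ∀ s ∈ funSp l, ∀ α, α < l → ∃ t ∈ funSp l, ∃ α', α ≤ α' ∧ α' < l ∧
    (∀ β, β < α → t β = s β) ∧ ∀ f ∈ funSp l, (∀ β, β < α' → f β = t β) → f ∉ A

/-- `A` belongs to the ideal `M^λ_{λ,λ}`, the `(<λ)`-complete ideal generated by the
nowhere dense subsets of `^λλ`. -/
def InMIdeal (l : Ordinal) (A : Set (Ordinal → Ordinal)) : Prop :=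
  A ⊆ funSp l ∧ ∃ θ, θ < l ∧ ∃ B : Ordinal → Set (Ordinal → Ordinal),
    (∀ i, i < θ → IsNwd l (B i)) ∧ A ⊆ ⋃ i ∈ Iio θ, B i

/-- The covering number `cov(M^λ_{λ,λ})`. -/
def covM (l : Ordinal) : Cardinal.{1} :=
  sInf {c : Cardinal | ∃ S : Set (Set (Ordinal → Ordinal)),
    (∀ A ∈ S, InMIdeal l A) ∧ funSp l ⊆ ⋃₀ S ∧ #S = c}

/-! A set `A` that is large in `p↾⟨X, C⟩` becomes large in `p` once the complement of
`B = ∪_{x ∈ X} Z^p_x` is added: on blocks `Z^p_x` with `x ∈ X` this is the definition of the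
restriction, and every other block of `p` is disjoint from `B`. So `A ∪ (λ \ B) ∈ fil(p)`.
Taking a common `≤⁰`-upper bound `s ∈ G*` of `p` and of a witness for `B ∈ fil(G*)`, both
`A ∪ (λ \ B)` and `B` lie in `fil(s)`, hence so does `A`. Thus `p↾⟨X, C⟩ ≤⁰ s`, and downward
closure puts `p↾⟨X, C⟩` into `G*`. -/

section Blocks

variable {C : Set Ordinal} {l : Ordinal}

lemma nxt_le {α β : Ordinal} (hβ : β ∈ C) (hαβ : α < β) : nxt C α ≤ β :=
  csInf_le' ⟨hβ, hαβ⟩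

lemma IsClubIn.nxt_mem (hC : IsClubIn C l) {α : Ordinal} (hα : α < l) :
    nxt C α ∈ C ∧ α < nxt C α := by
  obtain ⟨β, hβC, hβ⟩ := hC.2.2 α hα
  exact csInf_mem (show (C ∩ Ioi α).Nonempty from ⟨β, hβC, hβ⟩)

lemma disjoint_Ico_nxt {x y : Ordinal} (hx : x ∈ C) (hy : y ∈ C) (hxy : x ≠ y) :
    Disjoint (Ico x (nxt C x)) (Ico y (nxt C y)) := by
  wlog h : x < y generalizing x y
  · exact (this hy hx hxy.symm (lt_of_le_of_ne (not_lt.1 h) hxy.symm)).symm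
  exact Set.disjoint_left.2 fun z hzx hzy => (hzx.2.trans_le (nxt_le hy h)).not_ge hzy.1

lemma Ico_nxt_subset_Ico_nxt {D : Set Ordinal} (hCD : C ⊆ D) (hC : IsClubIn C l)
    {α x : Ordinal} (hα : α < l) (hx : x ∈ Ico α (nxt C α)) :
    Ico x (nxt D x) ⊆ Ico α (nxt C α) :=
  Ico_subset_Ico hx.1 (nxt_le (hCD (hC.nxt_mem hα).1) hx.2)

-- Take `α = sup (C ∩ [0, δ])`; it lies in `C` by closure.
lemma IsClubIn.exists_le_lt_nxt (hC : IsClubIn C l) {ε δ : Ordinal} (hε : ε ∈ C)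
    (hεδ : ε ≤ δ) (hδ : δ < l) : ∃ α ∈ C, ε ≤ α ∧ α ≤ δ ∧ δ < nxt C α := by
  have hbdd : BddAbove (C ∩ Iic δ) := ⟨δ, fun _ h => h.2⟩
  set α := sSup (C ∩ Iic δ)
  have hεα : ε ≤ α := le_csSup hbdd ⟨hε, hεδ⟩
  have hαδ : α ≤ δ := csSup_le ⟨ε, hε, hεδ⟩ fun _ h => h.2
  have hαC : α ∈ C := by
    by_contra hα
    have hα0 : α ≠ 0 := fun h0 => hα (by rwa [h0, ← nonpos_iff_eq_zero.1 (h0 ▸ hεα)])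
    have hbelow : C ∩ Iio α = C ∩ Iic δ := by
      ext x
      refine ⟨fun hx => ⟨hx.1, hx.2.le.trans hαδ⟩, fun hx => ⟨hx.1, ?_⟩⟩
      exact (le_csSup hbdd hx).lt_of_ne fun h => hα (h ▸ hx.1 : sSup (C ∩ Iic δ) ∈ C)
    exact hα (hC.2.1 α (hαδ.trans_lt hδ) hα0 (by rw [hbelow]))
  refine ⟨α, hαC, hεα, hαδ, not_le.1 fun h => ?_⟩
  have hn := hC.nxt_mem (hαδ.trans_lt hδ)
  exact (le_csSup hbdd ⟨hn.1, h⟩).not_gt hn.2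

lemma Ico_nxt_subset_diff_biUnion (hC : IsClubIn C l) {X : Set Ordinal} (hX : X ⊆ C)
    {δ : Ordinal} (hδ : δ ∈ C) (hδX : δ ∉ X) :
    Ico δ (nxt C δ) ⊆ Iio l \ ⋃ x ∈ X, Ico x (nxt C x) := by
  intro z hz
  refine ⟨hz.2.trans (hC.1 (hC.nxt_mem (hC.1 hδ)).1), ?_⟩
  simp only [mem_iUnion, not_exists]
  intro x hx hzx
  exact disjoint_left.1 (disjoint_Ico_nxt (hX hx) hδ fun h => hδX (h ▸ hx)) hzx hz

end Blocks

section Ultrafilters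

variable {Z : Set Ordinal} {D : Set (Set Ordinal)}

lemma IsUltraOn.mem_of_superset (hD : IsUltraOn Z D) {A B : Set Ordinal} (hA : A ∈ D)
    (hAB : A ⊆ B) : B ∩ Z ∈ D :=
  hD.2.2.2.1 A _ hA (subset_inter hAB (hD.1 A hA)) inter_subset_right

lemma IsUltraOn.inter_mem (hD : IsUltraOn Z D) {A B : Set Ordinal} (hA : A ∈ D) (hB : B ∈ D) :
    A ∩ B ∈ D :=
  hD.2.2.2.2.1 A B hA hB

lemma IsUltraOn.extend (hD : IsUltraOn Z D) {W : Set Ordinal} (hZW : Z ⊆ W) :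
    IsUltraOn W {A | A ⊆ W ∧ A ∩ Z ∈ D} := by
  obtain ⟨-, hZ, hempty, hsup, hinter, hcompl⟩ := hD
  refine ⟨fun A hA => hA.1, ⟨subset_rfl, by rwa [inter_eq_right.2 hZW]⟩,
    fun h => hempty (by simpa using h.2), ?_, ?_, ?_⟩
  · rintro A B ⟨-, hA⟩ hAB hBW
    exact ⟨hBW, hsup _ _ hA (inter_subset_inter_left _ hAB) inter_subset_right⟩
  · rintro A B ⟨hAW, hA⟩ ⟨-, hB⟩
    refine ⟨inter_subset_left.trans hAW, ?_⟩
    rw [inter_inter_distrib_right]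
    exact hinter _ _ hA hB
  · intro A hAW
    refine (hcompl (A ∩ Z) inter_subset_right).imp (fun h => ⟨hAW, h⟩)
      fun h => ⟨sdiff_subset, ?_⟩
    have hcompl_eq : (W \ A) ∩ Z = Z \ (A ∩ Z) := by
      ext z
      simp only [mem_inter_iff, mem_sdiff]
      exact ⟨fun h => ⟨h.2, fun h' => h.1.2 h'.1⟩,
        fun h => ⟨⟨hZW h.1, fun h' => h.2 ⟨h', h.1⟩⟩, h.1⟩⟩
    rwa [hcompl_eq]

end Ultrafilters

section Fil

variable {l : Ordinal}

lemma mem_fil_of_superset (s : Q0 l) {A B : Set Ordinal} (hA : A ∈ fil l s) (hAB : A ⊆ B)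
    (hB : B ⊆ Iio l) : B ∈ fil l s := by
  obtain ⟨-, ε, hε, h⟩ := hA
  exact ⟨hB, ε, hε, fun δ hδ hεδ =>
    (s.ultra δ hδ).mem_of_superset (h δ hδ hεδ) (inter_subset_left.trans hAB)⟩

lemma inter_mem_fil (s : Q0 l) {A B : Set Ordinal} (hA : A ∈ fil l s) (hB : B ∈ fil l s) :
    A ∩ B ∈ fil l s := by
  obtain ⟨hAl, εA, hεA, hA⟩ := hA
  obtain ⟨-, εB, hεB, hB⟩ := hB
  refine ⟨inter_subset_left.trans hAl, max εA εB, max_lt hεA hεB, fun δ hδ hεδ => ?_⟩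
  rw [inter_inter_distrib_right]
  exact (s.ultra δ hδ).inter_mem (hA δ hδ (le_of_max_le_left hεδ))
    (hB δ hδ (le_of_max_le_right hεδ))

end Fil

section Restriction

variable {l : Ordinal}

structure IsRestrictable (p : Q0 l) (X C : Set Ordinal) : Prop where
  subset_X : X ⊆ p.C
  subset_C : C ⊆ p.C
  club : IsClubIn C l
  existsUnique : ∀ α ∈ C, ∃! x, x ∈ X ∩ Ico α (nxt C α)

/-- The unique element of `X` in the block `[α, nxt C α)`, when there is one. -/
def restrictPt (X C : Set Ordinal) (α : Ordinal) : Ordinal := sInf (X ∩ Ico α (nxt C α))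

variable {p : Q0 l} {X C : Set Ordinal}

namespace IsRestrictable

lemma restrictPt_mem (h : IsRestrictable p X C) {α : Ordinal} (hα : α ∈ C) :
    restrictPt X C α ∈ X ∩ Ico α (nxt C α) :=
  csInf_mem (h.existsUnique α hα).exists

lemma eq_restrictPt (h : IsRestrictable p X C) {α x : Ordinal} (hα : α ∈ C)
    (hx : x ∈ X ∩ Ico α (nxt C α)) : x = restrictPt X C α :=
  (h.existsUnique α hα).unique hx (h.restrictPt_mem hα)

lemma Ico_restrictPt_subset (h : IsRestrictable p X C) {α : Ordinal} (hα : α ∈ C) :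
    Ico (restrictPt X C α) (nxt p.C (restrictPt X C α)) ⊆ Ico α (nxt C α) :=
  Ico_nxt_subset_Ico_nxt h.subset_C h.club (h.club.1 hα) (h.restrictPt_mem hα).2

end IsRestrictable

/-- The restriction `p↾⟨X, C⟩`. -/
def Q0.restrict (p : Q0 l) (h : IsRestrictable p X C) : Q0 l where
  C := C
  d α := {A | A ⊆ Ico α (nxt C α) ∧
    A ∩ Ico (restrictPt X C α) (nxt p.C (restrictPt X C α)) ∈ p.d (restrictPt X C α)}
  club := h.club
  lim δ hδ := p.lim δ (h.subset_C hδ)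
  ultra _ hα := (p.ultra _ (h.subset_X (h.restrictPt_mem hα).1)).extend
    (h.Ico_restrictPt_subset hα)

lemma Q0.restrict_d (h : IsRestrictable p X C) {α x : Ordinal} (hα : α ∈ C)
    (hx : x ∈ X ∩ Ico α (nxt C α)) :
    (p.restrict h).d α = {A | A ⊆ Ico α (nxt C α) ∧ A ∩ Ico x (nxt p.C x) ∈ p.d x} := by
  rw [h.eq_restrictPt hα hx]
  rfl

lemma union_diff_mem_fil_of_mem_fil_restrict (h : IsRestrictable p X C) {A : Set Ordinal}
    (hA : A ∈ fil l (p.restrict h)) :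
    A ∪ (Iio l \ ⋃ x ∈ X, Ico x (nxt p.C x)) ∈ fil l p := by
  obtain ⟨hAl, ε, hεl, hAε⟩ := hA
  have hε' := h.club.nxt_mem hεl
  refine ⟨union_subset hAl sdiff_subset, nxt C ε, h.club.1 hε'.1, fun δ hδ hεδ => ?_⟩
  by_cases hδX : δ ∈ X
  · obtain ⟨α, hαC, hεα, hαδ, hδα⟩ :=
      h.club.exists_le_lt_nxt hε'.1 hεδ (p.club.1 hδ)
    have hAα := hAε α hαC (hε'.2.le.trans hεα)
    rw [Q0.restrict_d h hαC ⟨hδX, hαδ, hδα⟩] at hAα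
    exact (p.ultra δ hδ).mem_of_superset hAα.2
      (inter_subset_left.trans (inter_subset_left.trans subset_union_left))
  · have hblock := Ico_nxt_subset_diff_biUnion p.club h.subset_X hδ hδX
    rw [inter_eq_right.2 (hblock.trans subset_union_right)]
    exact (p.ultra δ hδ).2.1

lemma le0_restrict (h : IsRestrictable p X C) {s : Q0 l} (hps : le0 l p s)
    (hB : (⋃ x ∈ X, Ico x (nxt p.C x)) ∈ fil l s) : le0 l (p.restrict h) s := by
  intro A hA
  have hAB := inter_mem_fil s (hps (union_diff_mem_fil_of_mem_fil_restrict h hA)) hB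
  rw [union_inter_distrib_right, sdiff_inter_self, union_empty] at hAB
  exact mem_fil_of_superset s hAB inter_subset_left hA.1

end Restriction

theorem stmt12_general (κ : Cardinal)
    (G : Set (Q0 κ.ord))
    (hdir : DirLtOn κ.ord ℵ₀ G (le0 κ.ord))
    (hdc : ∀ p ∈ G, ∀ q : Q0 κ.ord, le0 κ.ord q p → q ∈ G)
    (p : Q0 κ.ord) (hp : p ∈ G)
    (X : Set Ordinal) (hXsub : X ⊆ p.C)
    (C : Set Ordinal) (hCsub : C ⊆ p.C) (hclub : IsClubIn C κ.ord)
    (hres : ∀ α ∈ C, ∃! x, x ∈ X ∩ Ico α (nxt C α))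
    (hfil : (⋃ x ∈ X, Ico x (nxt p.C x)) ∈ filG κ.ord G) :
    ∃ q ∈ G, q.C = C ∧ ∀ α ∈ C, ∀ x ∈ X ∩ Ico α (nxt C α),
      q.d α = {A | A ⊆ Ico α (nxt C α) ∧ A ∩ Ico x (nxt p.C x) ∈ p.d x} := by
  have h : IsRestrictable p X C := ⟨hXsub, hCsub, hclub, hres⟩
  obtain ⟨r, hrG, hBr⟩ := mem_iUnion₂.1 hfil
  obtain ⟨s, hsG, hs⟩ := hdir.2 {p, r} (insert_subset hp (singleton_subset_iff.2 hrG))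
    ((finite_singleton r).insert p).lt_aleph0
  have hps : le0 κ.ord p s := hs p (mem_insert _ _)
  have hrs : le0 κ.ord r s := hs r (mem_insert_of_mem _ rfl)
  exact ⟨p.restrict h, hdc s hsG _ (le0_restrict h hps (hrs hBr)), rfl,
    fun α hα x hx => Q0.restrict_d h hα hx⟩

/-- Proposition 2.10(1): if `G*` is `≤⁰`-directed and `≤⁰`-downward closed, `p ∈ G*`
is restrictable to `⟨X, C⟩` and `∪_{x ∈ X} Z^p_x ∈ fil(G*)`, then the restriction
`p↾⟨X, C⟩` belongs to `G*`. -/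
theorem stmt12 (κ : Cardinal) (hreg : κ.IsRegular) (hunc : ℵ₀ < κ)
    (G : Set (Q0 κ.ord))
    (hdir : DirLtOn κ.ord ℵ₀ G (le0 κ.ord))
    (hdc : ∀ p ∈ G, ∀ q : Q0 κ.ord, le0 κ.ord q p → q ∈ G)
    (p : Q0 κ.ord) (hp : p ∈ G)
    (X : Set Ordinal) (hXsub : X ⊆ p.C) (hXcard : #X = #(Iio κ.ord))
    (C : Set Ordinal) (hCsub : C ⊆ p.C) (hclub : IsClubIn C κ.ord)
    (hres : ∀ α ∈ C, ∃! x, x ∈ X ∩ Ico α (nxt C α))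
    (hfil : (⋃ x ∈ X, Ico x (nxt p.C x)) ∈ filG κ.ord G) :
    ∃ q ∈ G, q.C = C ∧ ∀ α ∈ C, ∀ x ∈ X ∩ Ico α (nxt C α),
      q.d α = {A | A ⊆ Ico α (nxt C α) ∧ A ∩ Ico x (nxt p.C x) ∈ p.d x} :=
  stmt12_general κ G hdir hdc p hp X hXsub C hCsub hclub hres hfil

end Sh830

end
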